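/- Fix positive integers ℓ < k and t > 0. The homogeneous polynomial P(z) = |z|^{2k} + t|z|^{2k-2ℓ} Re(z^{2ℓ}) on ℂ is subharmonic on ℂ if and only if t ≤ k²/(k² - ℓ²). -/

import Mathlib

/-!
Writing `z = c + R e^{iθ}`, expanding `z^m z̄^n` binomially around `c` and averaging over `θ` kills
every monomial `(z - c)^p (z̄ - c̄)^q` with `p ≠ q`, so the circle mean of `P` around `c` is a
polynomial `∑_j R^{2j} a_j(c)` in `R²` (`a_j = polarPolyCoeff k ℓ t · j`) with `a_0(c) = P(c)`.

If `t (k² - ℓ²) ≤ k²`, every `a_j` with `j ≥ 1` is nonnegative, because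
`|Re(c^{k+ℓ-j} c̄^{k-ℓ-j})| ≤ |c|^{2(k-j)}` and `C(k+ℓ,j) C(k-ℓ,j) k² ≤ (k² - ℓ²) C(k,j)²`
(the ratio of consecutive terms only improves), so `P` has the sub-mean-value property.
Conversely, at a point `ω` with `|ω| = 1` and `ω^{2ℓ} = -1` the coefficient `a_1(ω)`, which is
`ΔP(ω)/4`, equals `k² - t (k² - ℓ²)`; it must be nonnegative since the mean minus `P(ω)` is
`R² (a_1(ω) + O(R²))`.
-/

/-- Subharmonicity on a set: upper semicontinuity together with the sub-mean value
inequality on all closed discs contained in the set. -/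
def SubharmonicOn (u : ℂ → ℝ) (Ω : Set ℂ) : Prop :=
  UpperSemicontinuousOn u Ω ∧
    ∀ z ∈ Ω, ∀ ρ : ℝ, 0 < ρ → Metric.closedBall z ρ ⊆ Ω →
      u z ≤ (2 * Real.pi)⁻¹ *
        ∫ θ in (0:ℝ)..(2 * Real.pi), u (z + (ρ : ℂ) * Complex.exp ((θ : ℂ) * Complex.I))

open Complex ComplexConjugate Finset
open Real (circleAverage)
open scoped Real

lemma subharmonicOn_univ_iff {u : ℂ → ℝ} :
    SubharmonicOn u Set.univ ↔
      UpperSemicontinuous u ∧ ∀ c, ∀ R > 0, u c ≤ circleAverage u c R := by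
  simp only [SubharmonicOn, upperSemicontinuousOn_univ_iff, Set.mem_univ, Set.subset_univ,
    forall_const, Real.circleAverage_def, smul_eq_mul, circleMap]

lemma integral_exp_int_mul_mul_I (d : ℤ) :
    ∫ θ in (0 : ℝ)..2 * π, exp (d * θ * I) = if d = 0 then (2 * π : ℂ) else 0 := by
  split_ifs with hd
  · simp [hd]
  have hdI : (d : ℂ) * I ≠ 0 := by simp [hd]
  simp_rw [mul_right_comm _ _ I]
  rw [integral_exp_mul_complex hdI]
  have : (d : ℂ) * I * (2 * π : ℝ) = d * (2 * π * I) := by push_cast; ring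
  rw [this, exp_int_mul_two_pi_mul_I]
  simp

lemma circleAverage_sub_pow_mul_conj_sub_pow (c : ℂ) (R : ℝ) (p q : ℕ) :
    circleAverage (fun z ↦ (z - c) ^ p * conj (z - c) ^ q) c R =
      if p = q then (((R ^ 2) ^ p : ℝ) : ℂ) else 0 := by
  have hmap (θ : ℝ) : (circleMap c R θ - c) ^ p * conj (circleMap c R θ - c) ^ q =
      (R : ℂ) ^ (p + q) * exp (((p - q : ℤ) : ℂ) * θ * I) := by
    rw [circleMap_sub_center, circleMap, zero_add, map_mul, conj_ofReal, ← exp_conj, mul_pow,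
      mul_pow, ← exp_nat_mul, ← exp_nat_mul, mul_mul_mul_comm, ← pow_add, ← exp_add]
    congr 2
    simp only [map_mul, conj_ofReal, conj_I]
    push_cast
    ring
  rw [Real.circleAverage_def]
  simp_rw [hmap]
  rw [intervalIntegral.integral_const_mul, integral_exp_int_mul_mul_I]
  simp only [sub_eq_zero, Nat.cast_inj]
  split_ifs with hpq
  · subst hpq
    rw [← two_mul, Complex.real_smul]
    push_cast
    field_simp
    rw [pow_mul]
  · simp

lemma pow_mul_conj_pow_eq_sum (c z : ℂ) (m n : ℕ) :
    z ^ m * conj z ^ n = ∑ p ∈ range (m + 1), ∑ q ∈ range (n + 1),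
      (m.choose p * n.choose q * c ^ (m - p) * conj c ^ (n - q) : ℂ) *
        ((z - c) ^ p * conj (z - c) ^ q) := by
  conv_lhs => rw [← sub_add_cancel z c, map_add, add_pow, add_pow, sum_mul_sum]
  refine sum_congr rfl fun p _ ↦ sum_congr rfl fun q _ ↦ ?_
  ring

lemma circleAverage_pow_mul_conj_pow (c : ℂ) (R : ℝ) {m n N : ℕ} (hn : n ≤ N) :
    circleAverage (fun z ↦ z ^ m * conj z ^ n) c R = ∑ j ∈ range (N + 1),
      (R ^ 2) ^ j • (m.choose j * n.choose j * c ^ (m - j) * conj c ^ (n - j) : ℂ) := by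
  have hintegrable {f : ℂ → ℂ} (hf : Continuous f) : CircleIntegrable f c R :=
    hf.continuousOn.circleIntegrable'
  have hterm (p q : ℕ) (a : ℂ) : circleAverage (fun z ↦ a * ((z - c) ^ p * conj (z - c) ^ q)) c R
      = a * if p = q then (((R ^ 2) ^ p : ℝ) : ℂ) else 0 := by
    rw [← circleAverage_sub_pow_mul_conj_sub_pow]
    exact Real.circleAverage_fun_smul (𝕜 := ℂ)
  simp_rw [pow_mul_conj_pow_eq_sum c _ m n]
  rw [Real.circleAverage_fun_sum fun p _ ↦ hintegrable (by fun_prop)]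
  rw [sum_congr rfl fun p _ ↦ Real.circleAverage_fun_sum fun q _ ↦ hintegrable (by fun_prop)]
  simp_rw [hterm, mul_ite, mul_zero]
  rw [sum_comm]
  simp_rw [sum_ite_eq', mem_range]
  rw [← sum_subset (range_subset_range.2 (by omega : n + 1 ≤ N + 1)) fun j _ hj ↦ ?_]
  · refine sum_congr rfl fun j _ ↦ ?_
    split_ifs with hj
    · rw [real_smul]
      push_cast
      ring
    · simp [Nat.choose_eq_zero_of_lt (by omega : m < j)]
  · simp [Nat.choose_eq_zero_of_lt (by simpa using hj : n < j)]

lemma choose_add_mul_choose_sub_mul_sq_le (k ℓ : ℕ) {j : ℕ} (hj : 1 ≤ j) :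
    (k + ℓ).choose j * (k - ℓ).choose j * k ^ 2 ≤ (k + ℓ) * (k - ℓ) * k.choose j ^ 2 := by
  induction j, hj using Nat.le_induction with
  | base => simp
  | succ j hj ih =>
    rcases lt_or_ge (k - ℓ) (j + 1) with hlt | hle
    · simp [Nat.choose_eq_zero_of_lt hlt]
    have hfactor : (k + ℓ - j) * (k - ℓ - j) ≤ (k - j) * (k - j) := by
      rw [show k + ℓ - j = (k - j) + ℓ by omega, show k - ℓ - j = (k - j) - ℓ by omega,
        ← Nat.sq_sub_sq, ← sq]
      exact Nat.sub_le _ _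
    refine Nat.le_of_mul_le_mul_right ?_ (show 0 < (j + 1) * (j + 1) by positivity)
    calc (k + ℓ).choose (j + 1) * (k - ℓ).choose (j + 1) * k ^ 2 * ((j + 1) * (j + 1))
        = ((k + ℓ).choose (j + 1) * (j + 1)) * ((k - ℓ).choose (j + 1) * (j + 1)) * k ^ 2 := by
          ring
      _ = (k + ℓ).choose j * (k - ℓ).choose j * k ^ 2 * ((k + ℓ - j) * (k - ℓ - j)) := by
          rw [Nat.choose_succ_right_eq, Nat.choose_succ_right_eq]; ring
      _ ≤ (k + ℓ) * (k - ℓ) * k.choose j ^ 2 * ((k - j) * (k - j)) := Nat.mul_le_mul ih hfactor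
      _ = (k + ℓ) * (k - ℓ) * (k.choose (j + 1) * (j + 1)) ^ 2 := by
          rw [Nat.choose_succ_right_eq]; ring
      _ = (k + ℓ) * (k - ℓ) * k.choose (j + 1) ^ 2 * ((j + 1) * (j + 1)) := by ring

lemma coeff_one_nonneg_of_forall_pos_le_sum {a : ℕ → ℝ} {n : ℕ} (hn : 1 ≤ n)
    (h : ∀ s > 0, a 0 ≤ ∑ j ∈ range (n + 1), s ^ j * a j) : 0 ≤ a 1 := by
  set g : ℝ → ℝ := fun s ↦ ∑ j ∈ range n, s ^ j * a (j + 1)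
  have hg : ∀ s > 0, 0 ≤ g s := fun s hs ↦ by
    have hsum : ∑ j ∈ range (n + 1), s ^ j * a j = a 0 + s * g s := by
      rw [sum_range_succ', mul_sum, add_comm]
      simp [pow_succ, mul_assoc, mul_comm]
    have := h s hs
    nlinarith
  have hg0 : g 0 = a 1 := by
    obtain ⟨m, rfl⟩ := Nat.exists_eq_add_of_le' hn
    simp [g, sum_range_succ']
  have hcont : Continuous g := by fun_prop
  rw [← hg0]
  exact ge_of_tendsto (hcont.tendsto 0 |>.mono_left nhdsWithin_le_nhds)
    (eventually_nhdsWithin_of_forall (s := Set.Ioi 0) hg)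

noncomputable def polarPoly (k ℓ : ℕ) (t : ℝ) (z : ℂ) : ℝ :=
  ‖z‖ ^ (2 * k) + t * ‖z‖ ^ (2 * k - 2 * ℓ) * (z ^ (2 * ℓ)).re

lemma continuous_polarPoly (k ℓ : ℕ) (t : ℝ) : Continuous (polarPoly k ℓ t) := by
  unfold polarPoly
  fun_prop

noncomputable def polarPolyCoeff (k ℓ : ℕ) (t : ℝ) (c : ℂ) (j : ℕ) : ℝ :=
  k.choose j ^ 2 * ‖c‖ ^ (2 * (k - j)) +
    t * (k + ℓ).choose j * (k - ℓ).choose j * (c ^ (k + ℓ - j) * conj c ^ (k - ℓ - j)).re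

lemma pow_mul_conj_pow_self (z : ℂ) (n : ℕ) : z ^ n * conj z ^ n = ((‖z‖ ^ (2 * n) : ℝ) : ℂ) := by
  rw [← mul_pow, mul_conj', pow_mul, ofReal_pow, ofReal_pow]

section
variable {k ℓ : ℕ} (hℓ : ℓ ≤ k) (t : ℝ)
include hℓ

lemma polarPoly_eq_re (z : ℂ) :
    polarPoly k ℓ t z = (z ^ k * conj z ^ k + t * (z ^ (k + ℓ) * conj z ^ (k - ℓ))).re := by
  rw [show k + ℓ = 2 * ℓ + (k - ℓ) by omega, pow_add, mul_assoc, pow_mul_conj_pow_self,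
    pow_mul_conj_pow_self, polarPoly, show 2 * (k - ℓ) = 2 * k - 2 * ℓ by omega]
  simp only [add_re, ofReal_re, mul_comm _ (ofReal _), mul_re, ofReal_im]
  ring

lemma polarPolyCoeff_zero (c : ℂ) : polarPolyCoeff k ℓ t c 0 = polarPoly k ℓ t c := by
  rw [polarPoly_eq_re hℓ, polarPolyCoeff, pow_mul_conj_pow_self]
  simp [-ofReal_pow]

lemma circleAverage_polarPoly (c : ℂ) (R : ℝ) :
    circleAverage (polarPoly k ℓ t) c R =
      ∑ j ∈ range (k + 1), (R ^ 2) ^ j * polarPolyCoeff k ℓ t c j := by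
  have hre : polarPoly k ℓ t =
      reCLM ∘ fun z ↦ z ^ k * conj z ^ k + t • (z ^ (k + ℓ) * conj z ^ (k - ℓ)) :=
    funext fun z ↦ by simp only [polarPoly_eq_re hℓ, real_smul, Function.comp, reCLM_apply]
  rw [hre, ContinuousLinearMap.circleAverage_comp_comm _
      (Continuous.continuousOn (by fun_prop)).circleIntegrable',
    Real.circleAverage_fun_add (Continuous.continuousOn (by fun_prop)).circleIntegrable'
      (Continuous.continuousOn (by fun_prop)).circleIntegrable']
  rw [Real.circleAverage_fun_smul, circleAverage_pow_mul_conj_pow c R le_rfl,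
    circleAverage_pow_mul_conj_pow c R (by omega : k - ℓ ≤ k), smul_sum, ← sum_add_distrib,
    reCLM_apply, re_sum]
  refine sum_congr rfl fun j _ ↦ ?_
  rw [mul_assoc _ (c ^ (k - j)), pow_mul_conj_pow_self, polarPolyCoeff]
  simp only [add_re, smul_re, ← ofReal_natCast, ← ofReal_mul, ofReal_re, mul_assoc,
    re_ofReal_mul, smul_eq_mul]
  ring
end

section
variable {k ℓ : ℕ} (hk : ℓ < k) {t : ℝ}
include hk

lemma polarPolyCoeff_nonneg (ht : 0 ≤ t) (htk : t * (k ^ 2 - ℓ ^ 2) ≤ k ^ 2) (c : ℂ) {j : ℕ}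
    (hj : 1 ≤ j) : 0 ≤ polarPolyCoeff k ℓ t c j := by
  rcases lt_or_ge (k - ℓ) j with hlt | hle
  · simp [polarPolyCoeff, Nat.choose_eq_zero_of_lt hlt]
    positivity
  have hre : -‖c‖ ^ (2 * (k - j)) ≤ (c ^ (k + ℓ - j) * conj c ^ (k - ℓ - j)).re := by
    refine neg_le_of_abs_le ((abs_re_le_norm _).trans_eq ?_)
    rw [norm_mul, norm_pow, norm_pow, norm_conj, ← pow_add]
    congr 1
    omega
  have hchoose : t * ((k + ℓ).choose j * (k - ℓ).choose j) ≤ k.choose j ^ 2 := by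
    have hk0 : (0 : ℝ) < k ^ 2 := pow_pos (Nat.cast_pos.2 (by omega)) 2
    have := choose_add_mul_choose_sub_mul_sq_le k ℓ hj
    have hcast : ((k + ℓ).choose j * (k - ℓ).choose j : ℝ) * k ^ 2 ≤
        (k ^ 2 - ℓ ^ 2) * k.choose j ^ 2 := by
      rw [show (k ^ 2 - ℓ ^ 2 : ℝ) = (k + ℓ : ℕ) * (k - ℓ : ℕ) by
        push_cast [Nat.cast_sub hk.le]; ring]
      exact_mod_cast this
    nlinarith [mul_le_mul_of_nonneg_left hcast ht, mul_le_mul_of_nonneg_right htk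
      (sq_nonneg (k.choose j : ℝ))]
  have hnorm : 0 ≤ ‖c‖ ^ (2 * (k - j)) := by positivity
  unfold polarPolyCoeff
  nlinarith [mul_le_mul_of_nonneg_right hchoose hnorm, mul_le_mul_of_nonneg_left hre
    (by positivity : 0 ≤ t * (k + ℓ).choose j * (k - ℓ).choose j)]

lemma polarPolyCoeff_one {ω : ℂ} (hω1 : ‖ω‖ = 1) (hω : ω ^ (2 * ℓ) = -1) :
    polarPolyCoeff k ℓ t ω 1 = k ^ 2 - t * (k ^ 2 - ℓ ^ 2) := by
  have hconj : ω ^ (k + ℓ - 1) * conj ω ^ (k - ℓ - 1) = -1 := by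
    rw [show k + ℓ - 1 = 2 * ℓ + (k - ℓ - 1) by omega, pow_add, mul_assoc,
      pow_mul_conj_pow_self, hω, hω1]
    simp
  simp only [polarPolyCoeff, Nat.choose_one_right, hconj, hω1, one_pow, neg_re, one_re]
  push_cast [Nat.cast_sub hk.le]
  ring
end

/-- for positive integers `ℓ < k` and `t > 0`, the polynomial
`P(z) = |z|^{2k} + t|z|^{2k-2ℓ}Re(z^{2ℓ})` is subharmonic on `ℂ` iff `t ≤ k²/(k²-ℓ²)`. -/
theorem stmt_9 (k ℓ : ℕ) (hℓ : 0 < ℓ) (hk : ℓ < k) (t : ℝ) (ht : 0 < t) :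
    SubharmonicOn
        (fun z => ‖z‖ ^ (2*k) + t * ‖z‖ ^ (2*k - 2*ℓ) * (z ^ (2*ℓ)).re)
        Set.univ
      ↔ t ≤ (k^2 : ℝ) / ((k^2 : ℝ) - (ℓ^2 : ℝ)) := by
  have hkℓ : (0 : ℝ) < k ^ 2 - ℓ ^ 2 := by
    have : (ℓ : ℝ) < k := by exact_mod_cast hk
    nlinarith
  rw [le_div_iff₀ hkℓ]
  change SubharmonicOn (polarPoly k ℓ t) _ ↔ _
  rw [subharmonicOn_univ_iff]
  constructor
  · rintro ⟨-, hmean⟩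
    obtain ⟨ω, hω⟩ := IsAlgClosed.exists_pow_nat_eq (-1 : ℂ) (by omega : 0 < 2 * ℓ)
    have hω1 : ‖ω‖ = 1 :=
      (pow_eq_one_iff_of_nonneg (norm_nonneg ω) (n := 2 * ℓ) (by omega)).1
        (by rw [← norm_pow, hω, norm_neg, norm_one])
    have := coeff_one_nonneg_of_forall_pos_le_sum (a := polarPolyCoeff k ℓ t ω) (n := k)
      (by omega) fun s hs ↦ by
        simpa [circleAverage_polarPoly hk.le, Real.sq_sqrt hs.le, polarPolyCoeff_zero hk.le]
          using hmean ω √s (Real.sqrt_pos.2 hs)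
    rw [polarPolyCoeff_one hk hω1 hω] at this
    linarith
  · intro htk
    refine ⟨continuous_polarPoly k ℓ t |>.upperSemicontinuous, fun c R _ ↦ ?_⟩
    rw [circleAverage_polarPoly hk.le, sum_range_succ', polarPolyCoeff_zero hk.le, pow_zero,
      one_mul, le_add_iff_nonneg_left]
    exact sum_nonneg fun j _ ↦ mul_nonneg (pow_nonneg (sq_nonneg R) _)
      (polarPolyCoeff_nonneg hk ht.le htk c (Nat.le_add_left 1 j))
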